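/- Let X : Fin N × Fin N → ℝ, x its row-wise vectorization x[mN+n] = X(m,n), and R its 2D autocorrelation with R(i,j) = Σ_{m=0}^{N-1-i} Σ_{n=0}^{N-1-j} X(m,n)X(m+i,n+j) for 0 ≤ i,j ≤ N-1 and R(i,j) = Σ_{m=0}^{N-1-i} Σ_{n=-j}^{N-1} X(m,n)X(m+i,n+j) for i > 0, -(N-1) ≤ j ≤ -1. Then for 0 ≤ i ≤ N-2 and 1 ≤ j ≤ N-1 with ℓ = iN + j, the 1D autocorrelation of x satisfies r[ℓ] = R(i,j) + R(i+1, j-N). -/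

import Mathlib

/-!
Write the index of the 1D sum as `k = m * N + n`. For the lag `ℓ = i * N + j`, the partner
`k + ℓ` lies in row `m + i`, column `n + j` when `n < N - j`, and wraps around to row `m + i + 1`,
column `n + j - N` otherwise. Splitting every row of the range
`N ^ 2 - ℓ = (N - 1 - i) * N + (N - j)` at column `N - j` therefore separates the 1D sum into
the two 2D autocorrelation terms.
-/

open Finset

section RowDecomposition

variable {M : Type*} [AddCommMonoid M]

theorem sum_range_mul_eq_sum_sum (f : ℕ → M) (A N : ℕ) :
    ∑ k ∈ range (A * N), f k = ∑ m ∈ range A, ∑ n ∈ range N, f (m * N + n) := by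
  induction A with
  | zero => simp
  | succ A ih => rw [Nat.succ_mul, sum_range_add, ih, sum_range_succ]

theorem sum_range_mul_add_eq_sum_sum_add_sum_sum (f : ℕ → M) {A c j N : ℕ} (hN : c + j = N) :
    ∑ k ∈ range (A * N + c), f k =
      (∑ m ∈ range (A + 1), ∑ n ∈ range c, f (m * N + n)) +
        ∑ m ∈ range A, ∑ t ∈ range j, f (m * N + c + t) := by
  subst hN
  simp only [sum_range_add, sum_range_mul_eq_sum_sum, sum_add_distrib, sum_range_succ, add_assoc]
  abel

end RowDecomposition

/-- For lags `ℓ = iN + j` with `0 ≤ i ≤ N-2` and `1 ≤ j ≤ N-1`, the 1D autocorrelation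
of the row-wise vectorization of `X` equals `R(i,j) + R(i+1, j-N)`. -/
theorem autocorrelation_1d_eq_2d_sum
    (N : ℕ) (X : ℕ → ℕ → ℝ) (x : ℕ → ℝ)
    (hx : ∀ m n, m < N → n < N → x (m * N + n) = X m n)
    (i j : ℕ) (hi : i ≤ N - 2) (hj1 : 1 ≤ j) (hj2 : j ≤ N - 1) :
    (∑ k ∈ Finset.range (N ^ 2 - (i * N + j)), x k * x (k + (i * N + j))) =
      (∑ m ∈ Finset.range (N - i), ∑ n ∈ Finset.range (N - j),
          X m n * X (m + i) (n + j)) +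
        ∑ m ∈ Finset.range (N - 1 - i), ∑ t ∈ Finset.range j,
          X m (N - j + t) * X (m + i + 1) t := by
  have hN : 1 ≤ N := by omega
  have hiN : i ≤ N - 1 := by omega
  have hjN : j ≤ N := by omega
  have hlen : N ^ 2 - (i * N + j) = (N - 1 - i) * N + (N - j) := by
    have hℓ : i * N + j ≤ N ^ 2 := by
      nlinarith [Nat.mul_le_mul_right N (show i + 1 ≤ N by omega)]
    zify [hℓ, hN, hiN, hjN]
    ring
  rw [hlen, sum_range_mul_add_eq_sum_sum_add_sum_sum _ (Nat.sub_add_cancel hjN),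
    show N - 1 - i + 1 = N - i by omega]
  congr 1 <;> refine sum_congr rfl fun m hm => sum_congr rfl fun n hn => ?_ <;>
    rw [mem_range] at hm hn
  · rw [show m * N + n + (i * N + j) = (m + i) * N + (n + j) by ring,
      hx m n (by omega) (by omega), hx (m + i) (n + j) (by omega) (by omega)]
  · have hwrap : m * N + (N - j) + n + (i * N + j) = (m + i + 1) * N + n := by
      zify [hjN]
      ring
    rw [hwrap, add_assoc, hx m (N - j + n) (by omega) (by omega),
      hx (m + i + 1) n (by omega) (by omega)]
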